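/- For any random walk on a finite tree T with m edges generated by an edge-weight function with asymmetry τ, the maximum hitting time satisfies H(T) ≤ F(τ, m), where F(t,m) = Σ_{k=0}^{m−1} c_k t^k with c_0 = m and c_k = 2(m−k) for 1 ≤ k ≤ m−1. -/

import Mathlib

/-!
Root the tree at `a`. Summing the hitting-time equations over the subtree `S` of a vertex
`u ≠ a` with parent `p`, the terms inside `S` cancel by symmetry of `w` and only the edge `u p`
leaves `S`, so `w(u,p) (H u - H p) = w(u,p) + 2 ∑_{z ∈ S, z ≠ u} w(z, parent z)`. Climbing from
`z` to `u` and applying the asymmetry bound at each step gives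
`w(z, parent z) ≤ τ^(depth z - depth u) w(u,p)`, hence
`H u - H p ≤ 1 + 2 ∑_{z ∈ S, z ≠ u} τ^(depth z - depth u)`.

Telescoping along the path from `x` to `a` (at most `m` edges) and exchanging the sums, each
vertex `z` contributes at most `2 ∑_{1 ≤ j < depth z} τ^j`. At most `m - j` vertices lie deeper
than `j`, because the path from such a vertex to the root passes through `j` non-root vertices of
depth at most `j`, and a tree with `m` edges has `m` non-root vertices.
-/

/-- `IsWeightedHittingTime G w a H` : `H` satisfies the linear system characterizing the
expected hitting times of the absorbing vertex `a` for the random walk on `G` generated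
by the edge-weight function `w` (transition probabilities `p_{xy} = w x y / ∑_z w x z`). -/
def IsWeightedHittingTime {V : Type*} [Fintype V] (G : SimpleGraph V)
    (w : V → V → ℝ) (a : V) (H : V → ℝ) : Prop :=
  H a = 0 ∧ ∀ x, x ≠ a →
    (∑ y, w x y) * H x = (∑ y, w x y) + ∑ y, w x y * H y

/-- `F t m = ∑_{k=0}^{m−1} c_k t^k` with `c_0 = m` and `c_k = 2(m−k)` for `1 ≤ k ≤ m−1`. -/
noncomputable def F (t : ℝ) (m : ℕ) : ℝ :=
  ∑ k ∈ Finset.range m, (if k = 0 then (m : ℝ) else 2 * ((m : ℝ) - (k : ℝ))) * t ^ k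

open Finset

lemma sum_sum_compl_mul_sub_eq {V : Type*} [Fintype V] [DecidableEq V] {w : V → V → ℝ}
    (hsymm : ∀ x y, w x y = w y x) {H : V → ℝ} {S : Finset V}
    (hH : ∀ x ∈ S, (∑ y, w x y) * H x = (∑ y, w x y) + ∑ y, w x y * H y) :
    ∑ x ∈ S, ∑ y ∈ Sᶜ, w x y * (H x - H y) = ∑ x ∈ S, ∑ y, w x y := by
  have hrow : ∀ x ∈ S, ∑ y, w x y * (H x - H y) = ∑ y, w x y := fun x hx ↦ by
    have := hH x hx
    simp only [mul_sub, sum_sub_distrib, ← sum_mul]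
    linarith
  have hantisymm : ∑ x ∈ S, ∑ y ∈ S, w x y * (H x - H y)
      = -∑ x ∈ S, ∑ y ∈ S, w x y * (H x - H y) := by
    conv_lhs => rw [sum_comm]
    simp only [← sum_neg_distrib]
    refine sum_congr rfl fun x _ ↦ sum_congr rfl fun y _ ↦ ?_
    rw [hsymm]
    ring
  rw [← sum_congr rfl hrow]
  simp only [← sum_add_sum_compl S, sum_add_distrib]
  linarith

namespace SimpleGraph.IsTree

variable {V : Type*} {T : SimpleGraph V} (ht : T.IsTree) (a : V)

noncomputable def pathTo (z : V) : T.Walk z a :=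
  (ht.existsUnique_path z a).choose

lemma isPath_pathTo (z : V) : (ht.pathTo a z).IsPath :=
  (ht.existsUnique_path z a).choose_spec.1

variable {ht a} in
lemma eq_pathTo {z : V} {p : T.Walk z a} (hp : p.IsPath) : p = ht.pathTo a z :=
  (ht.existsUnique_path z a).choose_spec.2 p hp

noncomputable def depth (z : V) : ℕ := (ht.pathTo a z).length

noncomputable def parent (z : V) : V := (ht.pathTo a z).snd

lemma pathTo_root : ht.pathTo a a = .nil := (eq_pathTo .nil).symm

@[simp]
lemma depth_root : ht.depth a a = 0 := by
  rw [depth, pathTo_root]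
  rfl

@[simp]
lemma parent_root : ht.parent a a = a := by
  rw [parent, pathTo_root]
  rfl

@[simp]
lemma depth_parent (z : V) : ht.depth a (ht.parent a z) = ht.depth a z - 1 := by
  rw [depth, depth, parent, ← eq_pathTo (ht.isPath_pathTo a z).tail, Walk.length_tail]

variable {ht a}

@[simp]
lemma depth_eq_zero_iff {z : V} : ht.depth a z = 0 ↔ z = a :=
  ⟨Walk.eq_of_length_eq_zero, by rintro rfl; exact depth_root ht _⟩

lemma adj_parent {z : V} (hz : z ≠ a) : T.Adj z (ht.parent a z) :=
  Walk.adj_snd (Walk.not_nil_of_ne hz)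

lemma depth_parent_add_one {z : V} (hz : z ≠ a) :
    ht.depth a (ht.parent a z) + 1 = ht.depth a z := by
  have : ht.depth a z ≠ 0 := mt depth_eq_zero_iff.mp hz
  rw [depth_parent]
  omega

variable (ht a) in
@[simp]
lemma depth_iterate_parent (k : ℕ) (z : V) :
    ht.depth a ((ht.parent a)^[k] z) = ht.depth a z - k := by
  induction k with
  | zero => rfl
  | succ k ih => rw [Function.iterate_succ_apply', depth_parent, ih, Nat.sub_sub]

lemma parent_eq_or_parent_eq_of_adj {z y : V} (h : T.Adj z y) :
    ht.parent a z = y ∨ ht.parent a y = z := by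
  classical
  by_cases hz : z ∈ (ht.pathTo a y).support
  · right
    have hstep : (ht.pathTo a y).takeUntil z hz = .cons h.symm .nil :=
      (ht.existsUnique_path y z).unique ((ht.isPath_pathTo a y).takeUntil hz)
        (by simp [h.ne'])
    rw [parent, ← (ht.pathTo a y).take_spec hz, hstep]
    simp
  · left
    rw [parent, ← eq_pathTo ((ht.isPath_pathTo a y).cons (h := h) hz)]
    simp

lemma not_parent_eq_and_parent_eq {z y : V} (h : T.Adj z y) :
    ¬ (ht.parent a z = y ∧ ht.parent a y = z) := by
  rintro ⟨rfl, hy⟩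
  have hz := congrArg (ht.depth a) hy
  simp only [depth_parent] at hz
  have hz0 : ht.depth a z = 0 := by omega
  rw [depth_eq_zero_iff] at hz0
  subst hz0
  exact h.ne (parent_root ht z).symm

lemma weight_eq_ite_add_ite [DecidableEq V] {w : V → V → ℝ}
    (hzero : ∀ x y, ¬ T.Adj x y → w x y = 0) (z y : V) :
    w z y = (if ht.parent a z = y then w z y else 0)
      + (if ht.parent a y = z then w z y else 0) := by
  by_cases h : T.Adj z y
  · have hnot := not_parent_eq_and_parent_eq (ht := ht) (a := a) h
    rcases parent_eq_or_parent_eq_of_adj (ht := ht) (a := a) h with h1 | h1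
    · rw [if_pos h1, if_neg fun h2 ↦ hnot ⟨h1, h2⟩, add_zero]
    · rw [if_pos h1, if_neg fun h2 ↦ hnot ⟨h2, h1⟩, zero_add]
  · simp [hzero z y h]

lemma sum_sum_eq_two_mul_sum_parent [DecidableEq V] {w : V → V → ℝ} (S : Finset V)
    (hsymm : ∀ x y, w x y = w y x)
    (hzero : ∀ x y, ¬ T.Adj x y → w x y = 0) :
    ∑ z ∈ S, ∑ y ∈ S, w z y = 2 * ∑ z ∈ S with ht.parent a z ∈ S, w z (ht.parent a z) := by
  have hhalf : ∑ z ∈ S, ∑ y ∈ S, (if ht.parent a z = y then w z y else 0)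
      = ∑ z ∈ S with ht.parent a z ∈ S, w z (ht.parent a z) := by
    rw [sum_filter]
    exact sum_congr rfl fun z _ ↦ sum_ite_eq S _ _
  have hswap : ∑ z ∈ S, ∑ y ∈ S, (if ht.parent a y = z then w z y else 0)
      = ∑ z ∈ S, ∑ y ∈ S, (if ht.parent a z = y then w z y else 0) := by
    rw [sum_comm]
    refine sum_congr rfl fun z _ ↦ sum_congr rfl fun y _ ↦ ?_
    rw [hsymm]
  calc ∑ z ∈ S, ∑ y ∈ S, w z y
      = ∑ z ∈ S, ∑ y ∈ S, ((if ht.parent a z = y then w z y else 0)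
          + (if ht.parent a y = z then w z y else 0)) :=
        sum_congr rfl fun z _ ↦ sum_congr rfl fun y _ ↦ weight_eq_ite_add_ite hzero z y
    _ = 2 * ∑ z ∈ S with ht.parent a z ∈ S, w z (ht.parent a z) := by
        simp only [sum_add_distrib, hswap, hhalf]
        ring

variable [Fintype V]

variable (ht a) in
open Classical in
noncomputable def subtree (u : V) : Finset V := {z | ∃ k, (ht.parent a)^[k] z = u}

lemma mem_subtree {u z : V} : z ∈ ht.subtree a u ↔ ∃ k, (ht.parent a)^[k] z = u := by
  simp [subtree]

lemma self_mem_subtree (u : V) : u ∈ ht.subtree a u := mem_subtree.mpr ⟨0, rfl⟩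

lemma mem_subtree_of_parent_mem {u z : V} (h : ht.parent a z ∈ ht.subtree a u) :
    z ∈ ht.subtree a u := by
  obtain ⟨k, hk⟩ := mem_subtree.mp h
  exact mem_subtree.mpr ⟨k + 1, hk⟩

lemma parent_mem_subtree {u z : V} (h : z ∈ ht.subtree a u) (hzu : z ≠ u) :
    ht.parent a z ∈ ht.subtree a u := by
  obtain ⟨_ | k, hk⟩ := mem_subtree.mp h
  · exact absurd hk hzu
  · exact mem_subtree.mpr ⟨k, hk⟩

lemma ne_root_of_mem_subtree {u z : V} (hu : u ≠ a) (h : z ∈ ht.subtree a u) : z ≠ a := by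
  rintro rfl
  obtain ⟨k, hk⟩ := mem_subtree.mp h
  exact hu (hk ▸ Function.iterate_fixed (parent_root ht _) k)

lemma depth_le_of_mem_subtree {u z : V} (h : z ∈ ht.subtree a u) :
    ht.depth a u ≤ ht.depth a z := by
  obtain ⟨k, rfl⟩ := mem_subtree.mp h
  simp

lemma depth_lt_of_mem_subtree {u z : V} (h : z ∈ ht.subtree a u) (hzu : z ≠ u) :
    ht.depth a u < ht.depth a z := by
  have hz : z ≠ a := fun hza ↦ hzu <| by
    obtain ⟨k, hk⟩ := mem_subtree.mp h
    rw [← hk, hza, Function.iterate_fixed (parent_root ht a)]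
  have := depth_le_of_mem_subtree (parent_mem_subtree h hzu)
  have := depth_parent_add_one (ht := ht) hz
  omega

lemma parent_not_mem_subtree {u : V} (hu : u ≠ a) : ht.parent a u ∉ ht.subtree a u :=
  fun h ↦ by
    have := depth_le_of_mem_subtree h
    have := depth_parent_add_one (ht := ht) hu
    omega

lemma eq_of_adj_of_mem_subtree_of_not_mem {u z y : V} (h : T.Adj z y)
    (hz : z ∈ ht.subtree a u) (hy : y ∉ ht.subtree a u) : z = u ∧ y = ht.parent a u := by
  rcases parent_eq_or_parent_eq_of_adj (ht := ht) (a := a) h with rfl | hyz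
  · by_cases hzu : z = u
    · exact ⟨hzu, hzu ▸ rfl⟩
    · exact absurd (parent_mem_subtree hz hzu) hy
  · exact absurd (mem_subtree_of_parent_mem (hyz ▸ hz)) hy

variable {w : V → V → ℝ} {τ : ℝ}

lemma weight_parent_le_pow_mul (hsymm : ∀ x y, w x y = w y x)
    (hτ : ∀ x y z, T.Adj x y → T.Adj x z → w x y ≤ τ * w x z) (hτ0 : 0 ≤ τ)
    {u z : V} (hu : u ≠ a) (hz : z ∈ ht.subtree a u) :
    w z (ht.parent a z) ≤ τ ^ (ht.depth a z - ht.depth a u) * w u (ht.parent a u) := by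
  obtain ⟨k, hk⟩ := mem_subtree.mp hz
  induction k generalizing z with
  | zero =>
    subst hk
    simp
  | succ k ih =>
    have hy : ht.parent a z ∈ ht.subtree a u := mem_subtree.mpr ⟨k, hk⟩
    have hz0 := ne_root_of_mem_subtree hu hz
    have hy0 := ne_root_of_mem_subtree hu hy
    calc w z (ht.parent a z) = w (ht.parent a z) z := hsymm _ _
      _ ≤ τ * w (ht.parent a z) (ht.parent a (ht.parent a z)) :=
        hτ _ _ _ (adj_parent hz0).symm (adj_parent hy0)
      _ ≤ τ * (τ ^ (ht.depth a (ht.parent a z) - ht.depth a u) * w u (ht.parent a u)) := by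
        gcongr
        exact ih hy hk
      _ = τ ^ (ht.depth a z - ht.depth a u) * w u (ht.parent a u) := by
        rw [← depth_parent_add_one hz0, Nat.sub_add_comm (depth_le_of_mem_subtree hy), pow_succ]
        ring

variable [DecidableEq V]

lemma filter_parent_mem_subtree {u : V} (hu : u ≠ a) :
    {z ∈ ht.subtree a u | ht.parent a z ∈ ht.subtree a u} = (ht.subtree a u).erase u := by
  ext z
  simp only [mem_filter, mem_erase]
  constructor
  · rintro ⟨hz, hp⟩
    exact ⟨by rintro rfl; exact parent_not_mem_subtree hu hp, hz⟩
  · rintro ⟨hzu, hz⟩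
    exact ⟨hz, parent_mem_subtree hz hzu⟩

lemma sum_sum_compl_subtree {M : Type*} [AddCommMonoid M] (g : V → V → M)
    (hg : ∀ z y, ¬ T.Adj z y → g z y = 0) {u : V} (hu : u ≠ a) :
    ∑ z ∈ ht.subtree a u, ∑ y ∈ (ht.subtree a u)ᶜ, g z y = g u (ht.parent a u) := by
  rw [← sum_product']
  refine sum_eq_single_of_mem (u, ht.parent a u)
    (by simp [self_mem_subtree, parent_not_mem_subtree hu]) ?_
  rintro ⟨z, y⟩ hzy hne
  rw [mem_product, mem_compl] at hzy
  by_cases h : T.Adj z y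
  · obtain ⟨rfl, rfl⟩ := eq_of_adj_of_mem_subtree_of_not_mem h hzy.1 hzy.2
    exact absurd rfl hne
  · exact hg z y h

variable {H : V → ℝ}

lemma weight_mul_sub_parent_eq (hH : IsWeightedHittingTime T w a H)
    (hsymm : ∀ x y, w x y = w y x) (hzero : ∀ x y, ¬ T.Adj x y → w x y = 0)
    {u : V} (hu : u ≠ a) :
    w u (ht.parent a u) * (H u - H (ht.parent a u))
      = w u (ht.parent a u) + 2 * ∑ z ∈ (ht.subtree a u).erase u, w z (ht.parent a z) := by
  have hcut := sum_sum_compl_mul_sub_eq hsymm (S := ht.subtree a u)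
    fun z hz ↦ hH.2 z (ne_root_of_mem_subtree hu hz)
  rw [sum_sum_compl_subtree _ (fun z y h ↦ by simp [hzero z y h]) hu] at hcut
  rw [hcut, ← sum_congr rfl fun z _ ↦ sum_add_sum_compl (ht.subtree a u) (w z),
    sum_add_distrib, sum_sum_compl_subtree w hzero hu,
    sum_sum_eq_two_mul_sum_parent (ht := ht) (a := a) _ hsymm hzero,
    filter_parent_mem_subtree hu]
  ring

lemma hittingTime_sub_parent_le (hH : IsWeightedHittingTime T w a H)
    (hsymm : ∀ x y, w x y = w y x) (hpos : ∀ x y, T.Adj x y → 0 < w x y)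
    (hzero : ∀ x y, ¬ T.Adj x y → w x y = 0)
    (hτ : ∀ x y z, T.Adj x y → T.Adj x z → w x y ≤ τ * w x z) (hτ0 : 0 ≤ τ)
    {u : V} (hu : u ≠ a) :
    H u - H (ht.parent a u)
      ≤ 1 + 2 * ∑ z ∈ (ht.subtree a u).erase u, τ ^ (ht.depth a z - ht.depth a u) := by
  refine le_of_mul_le_mul_left ?_ (hpos _ _ (adj_parent (ht := ht) hu))
  calc w u (ht.parent a u) * (H u - H (ht.parent a u))
      = w u (ht.parent a u) + 2 * ∑ z ∈ (ht.subtree a u).erase u, w z (ht.parent a z) :=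
        weight_mul_sub_parent_eq hH hsymm hzero hu
    _ ≤ w u (ht.parent a u) + 2 * ∑ z ∈ (ht.subtree a u).erase u,
          τ ^ (ht.depth a z - ht.depth a u) * w u (ht.parent a u) := by
        gcongr with z hz
        exact weight_parent_le_pow_mul hsymm hτ hτ0 hu (mem_of_mem_erase hz)
    _ = w u (ht.parent a u)
          * (1 + 2 * ∑ z ∈ (ht.subtree a u).erase u, τ ^ (ht.depth a z - ht.depth a u)) := by
        rw [← sum_mul]
        ring

lemma hittingTime_le_depth_add_two_mul_sum (hH : IsWeightedHittingTime T w a H)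
    (hsymm : ∀ x y, w x y = w y x) (hpos : ∀ x y, T.Adj x y → 0 < w x y)
    (hzero : ∀ x y, ¬ T.Adj x y → w x y = 0)
    (hτ : ∀ x y z, T.Adj x y → T.Adj x z → w x y ≤ τ * w x z) (hτ0 : 0 ≤ τ) (x : V) :
    H x ≤ ht.depth a x + 2 * ∑ i ∈ range (ht.depth a x),
      ∑ z ∈ (ht.subtree a ((ht.parent a)^[i] x)).erase ((ht.parent a)^[i] x),
        τ ^ (ht.depth a z - ht.depth a ((ht.parent a)^[i] x)) := by
  have hroot : (ht.parent a)^[ht.depth a x] x = a :=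
    (depth_eq_zero_iff (ht := ht)).mp (by simp)
  have hne : ∀ i < ht.depth a x, (ht.parent a)^[i] x ≠ a := fun i hi h ↦ by
    have := congrArg (ht.depth a) h
    simp only [depth_iterate_parent, depth_root] at this
    omega
  calc H x = ∑ i ∈ range (ht.depth a x),
        (H ((ht.parent a)^[i] x) - H ((ht.parent a)^[i + 1] x)) := by
        rw [sum_range_sub' (fun i ↦ H ((ht.parent a)^[i] x)), hroot, hH.1, sub_zero]
        rfl
    _ ≤ ∑ i ∈ range (ht.depth a x), (1 + 2 *
          ∑ z ∈ (ht.subtree a ((ht.parent a)^[i] x)).erase ((ht.parent a)^[i] x),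
            τ ^ (ht.depth a z - ht.depth a ((ht.parent a)^[i] x))) := by
        refine sum_le_sum fun i hi ↦ ?_
        rw [Function.iterate_succ_apply']
        exact hittingTime_sub_parent_le hH hsymm hpos hzero hτ hτ0 (hne i (mem_range.mp hi))
    _ = _ := by
        rw [sum_add_distrib, ← mul_sum]
        simp

lemma card_depth_gt_add_le [Fintype T.edgeSet] {j : ℕ} {c : V} (hj : j ≤ ht.depth a c) :
    #{z | j < ht.depth a z} + j ≤ #T.edgeFinset := by
  set A : Finset V := {z | z ≠ a ∧ ht.depth a z ≤ j}
  set B : Finset V := {z | j < ht.depth a z}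
  have hA : j ≤ #A := by
    have hsurj : Set.SurjOn (ht.depth a) A (Icc 1 j) := fun i hi ↦ by
      rw [coe_Icc, Set.mem_Icc] at hi
      refine ⟨(ht.parent a)^[ht.depth a c - i] c, ?_, by rw [depth_iterate_parent]; omega⟩
      rw [mem_coe, mem_filter, ne_eq, ← depth_eq_zero_iff (ht := ht), depth_iterate_parent]
      exact ⟨mem_univ _, by omega, by omega⟩
    simpa using card_le_card_of_surjOn _ hsurj
  have hAB : Disjoint A B := disjoint_filter.mpr fun z _ h1 h2 ↦ by omega
  have hsub : A ∪ B ⊆ univ.erase a := fun z hz ↦ by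
    simp only [A, B, mem_union, mem_filter, mem_univ, true_and] at hz
    refine mem_erase.mpr ⟨?_, mem_univ z⟩
    rintro rfl
    simp at hz
  have := card_le_card hsub
  rw [card_union_of_disjoint hAB, card_erase_of_mem (mem_univ a), card_univ,
    ← ht.card_edgeFinset] at this
  omega

lemma depth_le_card_edgeFinset [Fintype T.edgeSet] (z : V) : ht.depth a z ≤ #T.edgeFinset :=
  (Nat.le_add_left _ _).trans (card_depth_gt_add_le le_rfl)

lemma sum_range_sum_subtree_le (hτ0 : 0 ≤ τ) (x : V) :
    ∑ i ∈ range (ht.depth a x),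
      ∑ z ∈ (ht.subtree a ((ht.parent a)^[i] x)).erase ((ht.parent a)^[i] x),
        τ ^ (ht.depth a z - ht.depth a ((ht.parent a)^[i] x))
      ≤ ∑ z, ∑ j ∈ Ico 1 (ht.depth a z), τ ^ j := by
  rw [sum_comm' (t' := univ) (s' := fun z ↦
    {i ∈ range (ht.depth a x) | z ∈ (ht.subtree a ((ht.parent a)^[i] x)).erase
      ((ht.parent a)^[i] x)}) (by simp)]
  gcongr with z
  set I := {i ∈ range (ht.depth a x) | z ∈ (ht.subtree a ((ht.parent a)^[i] x)).erase
      ((ht.parent a)^[i] x)}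
  have hI : ∀ i ∈ I, i < ht.depth a x ∧ ht.depth a x - i < ht.depth a z := fun i hi ↦ by
    obtain ⟨hi, hz⟩ := mem_filter.mp hi
    have := depth_lt_of_mem_subtree (mem_of_mem_erase hz) (ne_of_mem_erase hz)
    rw [depth_iterate_parent] at this
    exact ⟨mem_range.mp hi, this⟩
  have hinj : Set.InjOn (fun i ↦ ht.depth a z - ht.depth a ((ht.parent a)^[i] x)) I :=
    fun i hi i' hi' h ↦ by
      have := hI i hi
      have := hI i' hi'
      simp only [depth_iterate_parent] at h
      omega
  rw [← sum_image (f := (τ ^ ·)) hinj]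
  refine sum_le_sum_of_subset_of_nonneg (fun j hj ↦ ?_) fun _ _ _ ↦ by positivity
  obtain ⟨i, hi, rfl⟩ := mem_image.mp hj
  have := hI i hi
  simp only [depth_iterate_parent, mem_Ico]
  omega

lemma sum_sum_Ico_depth_le [Fintype T.edgeSet] (hτ0 : 0 ≤ τ) :
    ∑ z, ∑ j ∈ Ico 1 (ht.depth a z), τ ^ j
      ≤ ∑ j ∈ Ico 1 #T.edgeFinset, (#T.edgeFinset - j : ℝ) * τ ^ j := by
  rw [sum_comm' (t' := Ico 1 #T.edgeFinset) (s' := fun j ↦ {z | j < ht.depth a z})]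
  · gcongr with j hj
    rw [sum_const, nsmul_eq_mul]
    gcongr
    rw [mem_Ico] at hj
    rcases eq_empty_or_nonempty {z | j < ht.depth a z} with hB | ⟨c, hc⟩
    · rw [hB, card_empty, Nat.cast_zero, sub_nonneg]
      exact_mod_cast hj.2.le
    · have := card_depth_gt_add_le (mem_filter.mp hc).2.le
      rw [le_sub_iff_add_le]
      exact_mod_cast this
  · intro z j
    have := depth_le_card_edgeFinset (ht := ht) (a := a) z
    simp only [mem_univ, true_and, mem_Ico, mem_filter]
    omega

end SimpleGraph.IsTree

lemma F_eq_add_two_mul_sum (t : ℝ) (m : ℕ) :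
    F t m = m + 2 * ∑ j ∈ Ico 1 m, (m - j : ℝ) * t ^ j := by
  rcases Nat.eq_zero_or_pos m with rfl | hm
  · simp [F]
  · rw [F, range_eq_Ico, sum_eq_sum_Ico_succ_bot hm, mul_sum]
    simp only [if_true, pow_zero, mul_one, zero_add]
    congr 1
    refine sum_congr rfl fun j hj ↦ ?_
    rw [if_neg (Nat.one_le_iff_ne_zero.mp (mem_Ico.mp hj).1)]
    ring

open SimpleGraph.IsTree

/-- For any random walk on a finite tree `T` with `m` edges generated by an edge-weight
function with asymmetry at most `τ`, every hitting time satisfies `H(x,a) ≤ F(τ, m)`. -/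
theorem tree_weighted_max_hitting_le {V : Type*} [Fintype V] [DecidableEq V]
    (T : SimpleGraph V) [DecidableRel T.Adj] (htree : T.IsTree)
    (m : ℕ) (hm : m = T.edgeFinset.card)
    (w : V → V → ℝ)
    (hw_symm : ∀ x y, w x y = w y x)
    (hw_pos : ∀ x y, T.Adj x y → 0 < w x y)
    (hw_zero : ∀ x y, ¬ T.Adj x y → w x y = 0)
    (τ : ℝ) (hτ : ∀ x y z, T.Adj x y → T.Adj x z → w x y ≤ τ * w x z)
    (a : V) (H : V → ℝ) (hH : IsWeightedHittingTime T w a H) (x : V) :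
    H x ≤ F τ m := by
  subst hm
  rcases T.edgeFinset.eq_empty_or_nonempty with hE | hE
  · have hx : x = a :=
      Fintype.card_le_one_iff.mp (by simpa [hE] using htree.card_edgeFinset.ge) x a
    simp [F, hE, hx, hH.1]
  obtain ⟨p, q, hpq⟩ := T.ne_bot_iff_exists_adj.mp (T.edgeFinset_nonempty.mp hE)
  have hτ0 : 0 ≤ τ := by nlinarith [hτ p q q hpq hpq, hw_pos p q hpq]
  calc H x ≤ _ := hittingTime_le_depth_add_two_mul_sum hH hw_symm hw_pos hw_zero hτ hτ0 x
    _ ≤ #T.edgeFinset + 2 * ∑ j ∈ Ico 1 #T.edgeFinset, (#T.edgeFinset - j : ℝ) * τ ^ j := by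
        gcongr
        · exact_mod_cast depth_le_card_edgeFinset x
        · exact (sum_range_sum_subtree_le (ht := htree) hτ0 x).trans (sum_sum_Ico_depth_le hτ0)
    _ = F τ #T.edgeFinset := (F_eq_add_two_mul_sum τ _).symm
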